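/- arXiv:1901.08566 — 2 statements merged into one kernel-verified Lean document; each statement's English description precedes it below -/
import Mathlib

section
/- Let F be a nonempty compact convex subset of P(d,n) and let M ∈ P(d,n) with R_F(M) finite. Then for every ensemble E = {(q_i, ρ_i)}_{i=1}^n of n quantum states on ℂ^d, p_succ(E, M) ≤ (1 + R_F(M)) · sup_{N ∈ F} p_succ(E, N). -/
open scoped BigOperators ComplexOrder

/-- An `n`-outcome POVM on `ℂ^d`: a tuple of positive semidefinite matrices summing to `1`. -/
def IsPOVM {d n : ℕ} (M : Fin n → Matrix (Fin d) (Fin d) ℂ) : Prop :=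
  (∀ i, (M i).PosSemidef) ∧ ∑ i, M i = 1

/-- The set of admissible noise parameters `s ≥ 0` for which some POVM `N` makes
`(M + s N)/(1+s)` a member of `F`. -/
def robustnessSet {d n : ℕ} (F : Set (Fin n → Matrix (Fin d) (Fin d) ℂ))
    (M : Fin n → Matrix (Fin d) (Fin d) ℂ) : Set ℝ :=
  {s : ℝ | 0 ≤ s ∧ ∃ N, IsPOVM N ∧
    (fun i => (1 + s)⁻¹ • (M i + s • N i)) ∈ F}

/-- The robustness of `M` with respect to `F`. -/
noncomputable def robustness {d n : ℕ} (F : Set (Fin n → Matrix (Fin d) (Fin d) ℂ))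
    (M : Fin n → Matrix (Fin d) (Fin d) ℂ) : ℝ :=
  sInf (robustnessSet F M)

/-- An ensemble of `n` quantum states on `ℂ^d`. -/
def IsEnsemble {d n : ℕ} (q : Fin n → ℝ) (ρ : Fin n → Matrix (Fin d) (Fin d) ℂ) : Prop :=
  (∀ i, 0 ≤ q i) ∧ ∑ i, q i = 1 ∧ ∀ i, (ρ i).PosSemidef ∧ (ρ i).trace = 1

/-- Success probability of discriminating the ensemble `(q, ρ)` with the POVM `M`. -/
noncomputable def psucc {d n : ℕ} (q : Fin n → ℝ) (ρ : Fin n → Matrix (Fin d) (Fin d) ℂ)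
    (M : Fin n → Matrix (Fin d) (Fin d) ℂ) : ℝ :=
  ∑ i, q i * ((M i * ρ i).trace).re

/-!
The success probability `p` is affine in the measurement. If `s` is admissible, with
`M_s = (M + s N)/(1 + s) ∈ F`, then `(1 + s) p(M_s) = p(M) + s p(N) ≥ p(M)`, so
`p(M) ≤ (1 + s) sup_F p`. The right-hand side is continuous in `s`, so the bound passes to the
infimum `R_F(M)` of the admissible `s`.
-/

open scoped MatrixOrder Matrix.Norms.L2Operator in
lemma Matrix.PosSemidef.trace_mul_nonneg {m : Type*} [Fintype m] {A B : Matrix m m ℂ}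
    (hA : A.PosSemidef) (hB : B.PosSemidef) : 0 ≤ (A * B).trace := by
  classical
  obtain ⟨C, rfl⟩ := CStarAlgebra.nonneg_iff_eq_star_mul_self.mp hA.nonneg
  rw [Matrix.mul_assoc, Matrix.trace_mul_comm]
  exact (hB.mul_mul_conjTranspose_same C).trace_nonneg

lemma le_apply_csInf_of_continuous {T : Set ℝ} (hT : T.Nonempty) (hb : BddBelow T) {a : ℝ}
    {f : ℝ → ℝ} (hf : Continuous f) (h : ∀ s ∈ T, a ≤ f s) : a ≤ f (sInf T) :=
  closure_minimal h (isClosed_le continuous_const hf) (csInf_mem_closure hT hb)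

namespace IsPOVM

variable {d n : ℕ} {N : Fin n → Matrix (Fin d) (Fin d) ℂ}

lemma posSemidef_one_sub (hN : IsPOVM N) (i : Fin n) : (1 - N i).PosSemidef := by
  rw [← hN.2, ← Finset.sum_erase_eq_sub (Finset.mem_univ i)]
  exact Matrix.posSemidef_sum _ fun j _ => hN.1 j

lemma trace_mul_le_trace (hN : IsPOVM N) (i : Fin n) {ρ : Matrix (Fin d) (Fin d) ℂ}
    (hρ : ρ.PosSemidef) : (N i * ρ).trace ≤ ρ.trace := by
  have := (hN.posSemidef_one_sub i).trace_mul_nonneg hρ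
  rwa [Matrix.sub_mul, Matrix.one_mul, Matrix.trace_sub, sub_nonneg] at this

end IsPOVM

section psucc

variable {d n : ℕ} {q : Fin n → ℝ} {ρ : Fin n → Matrix (Fin d) (Fin d) ℂ}

lemma psucc_nonneg {N : Fin n → Matrix (Fin d) (Fin d) ℂ} (hN : IsPOVM N)
    (hE : IsEnsemble q ρ) : 0 ≤ psucc q ρ N :=
  Finset.sum_nonneg fun i _ => mul_nonneg (hE.1 i)
    (Complex.nonneg_iff.mp ((hN.1 i).trace_mul_nonneg (hE.2.2 i).1)).1

lemma psucc_le_one {N : Fin n → Matrix (Fin d) (Fin d) ℂ} (hN : IsPOVM N)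
    (hE : IsEnsemble q ρ) : psucc q ρ N ≤ 1 := by
  have hterm (i : Fin n) : ((N i * ρ i).trace).re ≤ 1 := by
    simpa [(hE.2.2 i).2] using (Complex.le_def.mp (hN.trace_mul_le_trace i (hE.2.2 i).1)).1
  calc psucc q ρ N ≤ ∑ i, q i * 1 :=
        Finset.sum_le_sum fun i _ => mul_le_mul_of_nonneg_left (hterm i) (hE.1 i)
    _ = 1 := by simp [hE.2.1]

lemma psucc_smul_add_smul (a b : ℝ) (M N : Fin n → Matrix (Fin d) (Fin d) ℂ) :
    psucc q ρ (fun i => a • M i + b • N i) = a * psucc q ρ M + b * psucc q ρ N := by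
  simp only [psucc, Matrix.add_mul, Matrix.smul_mul, Matrix.trace_add, Matrix.trace_smul,
    Complex.add_re, Complex.smul_re, smul_eq_mul, Finset.mul_sum, ← Finset.sum_add_distrib]
  exact Finset.sum_congr rfl fun i _ => by ring

lemma psucc_le_one_add_mul_sSup_of_mem_robustnessSet
    {F : Set (Fin n → Matrix (Fin d) (Fin d) ℂ)} (hsub : ∀ N ∈ F, IsPOVM N)
    {M : Fin n → Matrix (Fin d) (Fin d) ℂ} {s : ℝ} (hs : s ∈ robustnessSet F M)
    (hE : IsEnsemble q ρ) :
    psucc q ρ M ≤ (1 + s) * sSup {x : ℝ | ∃ N ∈ F, x = psucc q ρ N} := by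
  obtain ⟨hs0, N, hN, hmix⟩ := hs
  have hbdd : BddAbove {x : ℝ | ∃ N ∈ F, x = psucc q ρ N} :=
    ⟨1, by rintro _ ⟨N', hN', rfl⟩; exact psucc_le_one (hsub N' hN') hE⟩
  have hle := le_csSup hbdd ⟨_, hmix, rfl⟩
  simp only [smul_add, smul_smul] at hle
  rw [psucc_smul_add_smul] at hle
  have h1s : (0 : ℝ) < 1 + s := by linarith
  calc psucc q ρ M ≤ psucc q ρ M + s * psucc q ρ N :=
        le_add_of_nonneg_right (mul_nonneg hs0 (psucc_nonneg hN hE))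
    _ = (1 + s) * ((1 + s)⁻¹ * psucc q ρ M + ((1 + s)⁻¹ * s) * psucc q ρ N) := by
        field_simp
    _ ≤ _ := by gcongr

end psucc

theorem psucc_le_one_add_robustness_general {d n : ℕ}
    (F : Set (Fin n → Matrix (Fin d) (Fin d) ℂ))
    (hsub : ∀ N ∈ F, IsPOVM N)
    (M : Fin n → Matrix (Fin d) (Fin d) ℂ)
    (hfin : (robustnessSet F M).Nonempty)
    (q : Fin n → ℝ) (ρ : Fin n → Matrix (Fin d) (Fin d) ℂ) (hE : IsEnsemble q ρ) :
    psucc q ρ M ≤ (1 + robustness F M) * sSup {x : ℝ | ∃ N ∈ F, x = psucc q ρ N} :=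
  le_apply_csInf_of_continuous (f := fun s => (1 + s) * sSup {x | ∃ N ∈ F, x = psucc q ρ N})
    hfin ⟨0, fun _ hs => hs.1⟩ (by fun_prop)
    fun _ hs => psucc_le_one_add_mul_sSup_of_mem_robustnessSet hsub hs hE

/-- For every ensemble, the advantage of `M` over the free measurements is bounded by
`1 + R_F(M)`. -/
theorem psucc_le_one_add_robustness {d n : ℕ}
    (F : Set (Fin n → Matrix (Fin d) (Fin d) ℂ))
    (hne : F.Nonempty) (hcomp : IsCompact F) (hconv : Convex ℝ F)
    (hsub : ∀ N ∈ F, IsPOVM N)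
    (M : Fin n → Matrix (Fin d) (Fin d) ℂ) (hM : IsPOVM M)
    (hfin : (robustnessSet F M).Nonempty)
    (q : Fin n → ℝ) (ρ : Fin n → Matrix (Fin d) (Fin d) ℂ) (hE : IsEnsemble q ρ) :
    psucc q ρ M ≤ (1 + robustness F M) * sSup {x : ℝ | ∃ N ∈ F, x = psucc q ρ N} :=
  psucc_le_one_add_robustness_general F hsub M hfin q ρ hE
end

section
/- For every M ∈ P(d,n), the robustness with respect to the incoherent measurements satisfies R_IC(M) ≤ min{d, n} − 1. -/
open scoped BigOperators ComplexOrder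

/-- The set of incoherent `n`-outcome POVMs on `ℂ^d`: all effects are diagonal
in the standard basis. -/
def IC (d n : ℕ) : Set (Fin n → Matrix (Fin d) (Fin d) ℂ) :=
  {S | IsPOVM S ∧ ∀ a, ∀ i j, i ≠ j → S a i j = 0}

/-! `R_F(M) ≤ s` whenever `M_i ≤ (1 + s) S_i` for some `S ∈ F`: the noise is then
`N_i = ((1 + s) S_i - M_i) / s`. Against the trivial POVM `S_i = I/n` this holds with `s = n - 1`,
since `M_i ≤ I`. Against the dephased POVM `S_i = Δ(M_i)` it holds with `s = d - 1`, by the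
pinching inequality `A ≤ d Δ(A)` for positive semidefinite `A`. -/

open scoped MatrixOrder
open Matrix

/-- `2 (d Δ(A) - A) = ∑ᵢⱼ (E_i - E_j) A (E_i - E_j)`, with `E_i` the diagonal matrix units. -/
lemma Matrix.PosSemidef.le_card_nsmul_diagonal_diag {𝕜 ι : Type*} [RCLike 𝕜] [Fintype ι]
    [DecidableEq ι] {A : Matrix ι ι 𝕜} (hA : A.PosSemidef) :
    A ≤ Fintype.card ι • diagonal (diag A) := by
  set E : ι → Matrix ι ι 𝕜 := fun i => single i i 1
  have hE : ∀ i j, (E i - E j)ᴴ = E i - E j := fun i j => by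
    simp [E, conjTranspose_sub, conjTranspose_single]
  have hEAE : ∀ i j, E i * A * E j = single i j (A i j) := fun i j => by
    simp [E, single_mul_mul_single]
  have hdiag : ∑ i, E i * A * E i = diagonal (diag A) := by
    simp only [hEAE]
    exact sum_single_eq_diagonal _
  have hfull : ∑ i, ∑ j, E i * A * E j = A := by
    simp only [hEAE, ← matrix_eq_sum_single]
  have hsum : (2 : ℝ) • (Fintype.card ι • diagonal (diag A) - A) =
      ∑ i, ∑ j, (E i - E j)ᴴ * A * (E i - E j) := by
    simp only [hE, sub_mul, mul_sub, Finset.sum_sub_distrib, Finset.sum_const, Finset.card_univ,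
      hfull, ← Finset.smul_sum, hdiag]
    rw [Finset.sum_comm, hfull]
    module
  have hpos := hsum ▸ posSemidef_sum _ fun i _ =>
    posSemidef_sum _ fun j _ => hA.conjTranspose_mul_mul_same (E i - E j)
  rw [le_iff]
  simpa [smul_smul] using hpos.smul (a := (2⁻¹ : ℝ)) (by norm_num)

section

variable {d n : ℕ} {F : Set (Fin n → Matrix (Fin d) (Fin d) ℂ)}
  {M S : Fin n → Matrix (Fin d) (Fin d) ℂ} {s : ℝ}

lemma mem_robustnessSet_of_le_smul (hM : IsPOVM M) (hS : IsPOVM S) (hSF : S ∈ F) (hs : 0 ≤ s)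
    (hle : ∀ i, M i ≤ (1 + s) • S i) : s ∈ robustnessSet F M := by
  rcases hs.eq_or_lt with rfl | hs
  · have hMS : M = S := by
      have := (Finset.sum_eq_sum_iff_of_le fun i _ => by simpa using hle i).mp
        (hM.2.trans hS.2.symm)
      exact funext fun i => this i (Finset.mem_univ i)
    exact ⟨le_rfl, M, hM, by simpa [hMS] using hSF⟩
  · refine ⟨hs.le, fun i => s⁻¹ • ((1 + s) • S i - M i), ⟨fun i => ?_, ?_⟩, ?_⟩
    · exact (le_iff.mp (hle i)).smul (inv_nonneg.mpr hs.le)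
    · rw [← Finset.smul_sum, Finset.sum_sub_distrib, ← Finset.smul_sum, hS.2, hM.2, add_smul,
        one_smul, add_sub_cancel_left, smul_smul, inv_mul_cancel₀ hs.ne', one_smul]
    · convert hSF using 2 with i
      rw [smul_smul, mul_inv_cancel₀ hs.ne', one_smul, add_sub_cancel, smul_smul,
        inv_mul_cancel₀ (by positivity), one_smul]

lemma robustness_le_of_le_smul (hM : IsPOVM M) (hS : IsPOVM S) (hSF : S ∈ F) (hs : 0 ≤ s)
    (hle : ∀ i, M i ≤ (1 + s) • S i) : robustness F M ≤ s :=
  csInf_le ⟨0, fun _ h => h.1⟩ (mem_robustnessSet_of_le_smul hM hS hSF hs hle)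

lemma IsPOVM.le_one (hM : IsPOVM M) (i : Fin n) : M i ≤ 1 :=
  hM.2 ▸ Finset.single_le_sum (fun j _ => (hM.1 j).nonneg) (Finset.mem_univ i)

lemma IsPOVM.diagonal_diag_mem_IC (hM : IsPOVM M) :
    (fun a => diagonal (diag (M a))) ∈ IC d n := by
  refine ⟨⟨fun a => posSemidef_diagonal_iff.mpr fun k => (hM.1 a).diag_nonneg, ?_⟩,
    fun _ i j hij => diagonal_apply_ne _ hij⟩
  change ∑ a, diagonalAddMonoidHom (Fin d) ℂ (diag (M a)) = 1
  rw [← map_sum, ← diag_sum, hM.2, diag_one]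
  exact diagonal_one

lemma inv_natCast_smul_one_mem_IC (hn : 0 < n) :
    (fun _ => (n : ℝ)⁻¹ • (1 : Matrix (Fin d) (Fin d) ℂ)) ∈ IC d n := by
  refine ⟨⟨fun _ => PosSemidef.one.smul (by positivity), ?_⟩, fun _ i j hij => ?_⟩
  · rw [Finset.sum_const, Finset.card_univ, Fintype.card_fin, ← Nat.cast_smul_eq_nsmul ℝ,
      smul_smul, mul_inv_cancel₀ (by positivity), one_smul]
  · simp [one_apply_ne hij]

lemma robustness_IC_le_card_outcomes_sub_one (hn : 0 < n) (hM : IsPOVM M) :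
    robustness (IC d n) M ≤ n - 1 := by
  refine robustness_le_of_le_smul hM (inv_natCast_smul_one_mem_IC hn).1
    (inv_natCast_smul_one_mem_IC hn) (sub_nonneg.mpr (Nat.one_le_cast.mpr hn)) fun i => ?_
  rw [add_sub_cancel, smul_smul, mul_inv_cancel₀ (by positivity), one_smul]
  exact hM.le_one i

lemma robustness_IC_le_dim_sub_one (hd : 0 < d) (hM : IsPOVM M) :
    robustness (IC d n) M ≤ d - 1 := by
  refine robustness_le_of_le_smul hM hM.diagonal_diag_mem_IC.1 hM.diagonal_diag_mem_IC
    (sub_nonneg.mpr (Nat.one_le_cast.mpr hd)) fun i => ?_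
  rw [add_sub_cancel, Nat.cast_smul_eq_nsmul]
  simpa using (hM.1 i).le_card_nsmul_diagonal_diag

end

/-- The robustness with respect to incoherent measurements never exceeds `min{d,n} − 1`. -/
theorem robustness_IC_le {d n : ℕ} (hd : 0 < d) (hn : 0 < n)
    (M : Fin n → Matrix (Fin d) (Fin d) ℂ) (hM : IsPOVM M) :
    robustness (IC d n) M ≤ min (d : ℝ) (n : ℝ) - 1 := by
  rw [← min_sub_sub_right]
  exact le_min (robustness_IC_le_dim_sub_one hd hM)
    (robustness_IC_le_card_outcomes_sub_one hn hM)
end
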